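/- Let G be a finite connected loopless multigraph with n vertices and m edges, and let f be a divisor on G with deg(f) > 2(m − n). Then ρ(f) = deg(f) − g, where g = m − n + 1 is the genus of G. -/

import Mathlib

/-- A finite loopless multigraph on vertex set `V`, given by its symmetric
edge-multiplicity function `e`. -/
structure Multigraph (V : Type*) [Fintype V] [DecidableEq V] where
  e : V → V → ℕ
  symm : ∀ u v, e u v = e v u
  loopless : ∀ v, e v v = 0

namespace Multigraph

variable {V : Type*} [Fintype V] [DecidableEq V]

/-- The degree of a vertex of a multigraph. -/
def vdeg (G : Multigraph V) (v : V) : ℕ := ∑ u, G.e v u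

/-- The number of edges of a multigraph. -/
def edgeCount (G : Multigraph V) : ℕ := (∑ u, ∑ v, G.e u v) / 2

/-- The underlying simple graph (adjacency) of a multigraph. -/
def toSimple (G : Multigraph V) : SimpleGraph V where
  Adj u v := G.e u v ≠ 0
  symm := ⟨by intro u v h; exact show G.e v u ≠ 0 by rwa [G.symm]⟩
  loopless := ⟨by intro v h; exact h (G.loopless v)⟩

/-- A multigraph is connected if its underlying simple graph is. -/
def Connected (G : Multigraph V) : Prop := G.toSimple.Connected

/-- The degree of a divisor `f : V → ℤ`. -/
def degree (f : V → ℤ) : ℤ := ∑ v, f v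

/-- A divisor is effective if all its values are nonnegative. -/
def Effective (f : V → ℤ) : Prop := ∀ v, 0 ≤ f v

/-- The divisor `x · Δ_G`, where `Δ_G` is the Laplacian matrix of `G`. -/
def lapApply (G : Multigraph V) (x : V → ℤ) : V → ℤ :=
  fun v => x v * (G.vdeg v : ℤ) - ∑ u, x u * (G.e u v : ℤ)

/-- Linear equivalence of divisors: `g = f + x Δ_G` for some `x : V → ℤ`. -/
def LinEquiv (G : Multigraph V) (f g : V → ℤ) : Prop :=
  ∃ x : V → ℤ, g = f + G.lapApply x

/-- A divisor is L-effective if it is linearly equivalent to an effective divisor. -/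
def LEffective (G : Multigraph V) (f : V → ℤ) : Prop :=
  ∃ g : V → ℤ, G.LinEquiv f g ∧ Effective g

/-- The Baker–Norine rank of a divisor: `-1` if `f` is not L-effective, and
otherwise the largest `r ≥ 0` such that `f - λ` is L-effective for every
effective divisor `λ` of degree `r`. -/
noncomputable def rank (G : Multigraph V) (f : V → ℤ) : ℤ :=
  sSup ({-1} ∪ {r : ℤ | 0 ≤ r ∧
    ∀ l : V → ℤ, Effective l → degree l = r → G.LEffective (f - l)})

/-- The divisor `ε_v`. -/
def epsDiv (v : V) : V → ℤ := fun u => if u = v then 1 else 0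

/-- A tree: a connected acyclic (multi)graph. -/
def IsTree (G : Multigraph V) : Prop :=
  G.toSimple.IsTree ∧ ∀ u v, G.e u v ≤ 1

/-- A cycle graph: connected, and every vertex has degree 2. -/
def IsCycleGraph (G : Multigraph V) : Prop :=
  G.Connected ∧ ∀ v, G.vdeg v = 2

/-- An edge: two vertices joined by a single edge. -/
def IsEdgeGraph (G : Multigraph V) : Prop :=
  Fintype.card V = 2 ∧ G.Connected ∧ ∀ u v, G.e u v ≤ 1

/-- A good divisor (on a cycle): degree `0` and linearly equivalent to `0`. -/
def Good (G : Multigraph V) (f : V → ℤ) : Prop :=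
  degree f = 0 ∧ G.LinEquiv f 0

/-- A bad divisor (on a cycle): degree `0` and not linearly equivalent to `0`. -/
def Bad (G : Multigraph V) (f : V → ℤ) : Prop :=
  degree f = 0 ∧ ¬ G.LinEquiv f 0

/-- The induced sub-multigraph on a finite set `S` of vertices. -/
def induce (G : Multigraph V) (S : Finset V) : Multigraph {x // x ∈ S} where
  e a b := G.e a.1 b.1
  symm := fun a b => G.symm a.1 b.1
  loopless := fun a => G.loopless a.1

/-- `v` decomposes the induced subgraph of `G` on `S` into the induced
subgraphs on `V1` and `U`: they cover `S`, meet exactly in `v`, are both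
connected, and there is no edge between `V1 \ {v}` and `U \ {v}`. -/
def DecompOn (G : Multigraph V) (S : Finset V) (v : V) (V1 U : Finset V) : Prop :=
  V1 ∪ U = S ∧ V1 ∩ U = {v} ∧
  (G.induce V1).Connected ∧ (G.induce U).Connected ∧
  ∀ a ∈ V1, ∀ b ∈ U, a ≠ v → b ≠ v → G.e a b = 0

/-- `v` decomposes `G` into the induced subgraphs on `V1` and `U`. -/
def Decomp (G : Multigraph V) (v : V) (V1 U : Finset V) : Prop :=
  G.DecompOn Finset.univ v V1 U

/-- The contraction `f_{G/H}` of a divisor `f`, where `H = G(U)` and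
`G/H = G(V1)`, the cut vertex being `v`. -/
def contractDiv (f : V → ℤ) (v : V) (V1 U : Finset V) : {x // x ∈ V1} → ℤ :=
  fun u => if u.1 = v then ∑ w ∈ U, f w else f u.1

/-- The zero `f_{N(H)}` of a divisor `f`, where `H = G(U)`, the cut vertex
being `v`. -/
def zeroDiv (f : V → ℤ) (v : V) (U : Finset V) : {x // x ∈ U} → ℤ :=
  fun u => if u.1 = v then - ∑ w ∈ U.erase v, f w else f u.1

/-- `ε_v` as a divisor on an induced subgraph. -/
def epsDivOn (S : Finset V) (v : V) : {x // x ∈ S} → ℤ :=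
  fun u => if u.1 = v then 1 else 0

/-- A simple cycle of `G`, given as a sub-multigraph (an edge-multiplicity
function bounded by that of `G`) which is connected on its support and in
which every vertex of its (nonempty) support has degree 2. -/
def IsCycleSubgraph (G : Multigraph V) (h : V → V → ℕ) : Prop :=
  (∀ u v, h u v ≤ G.e u v) ∧ (∀ u v, h u v = h v u) ∧
  (∀ v, (∑ u, h v u = 0) ∨ (∑ u, h v u = 2)) ∧
  (∃ v, ∑ u, h v u ≠ 0) ∧
  (∀ v w, (∑ u, h v u ≠ 0) → (∑ u, h w u ≠ 0) →
    Relation.ReflTransGen (fun a b => h a b ≠ 0) v w)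

/-- The vertex support of a sub-multigraph. -/
def cycleSupport (h : V → V → ℕ) : Finset V :=
  Finset.univ.filter (fun v => ∑ u, h v u ≠ 0)

/-- A cactus: a connected multigraph in which any two distinct simple cycles
have at most one vertex in common (in particular every edge has multiplicity
at most 2, since parallel edges form 2-cycles). -/
def IsCactus (G : Multigraph V) : Prop :=
  G.Connected ∧ (∀ u v, G.e u v ≤ 2) ∧
  ∀ h₁ h₂ : V → V → ℕ, G.IsCycleSubgraph h₁ → G.IsCycleSubgraph h₂ → h₁ ≠ h₂ →
    (cycleSupport h₁ ∩ cycleSupport h₂).card ≤ 1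

/-- One step of a block elimination scheme: `G(S')` is obtained from `G(S)`
by contracting a free block (an edge or a cycle) `G(U)` at the vertex `v`. -/
def BlockStep (G : Multigraph V) (S S' : Finset V) : Prop :=
  ∃ (v : V) (U : Finset V), G.DecompOn S v S' U ∧
    ((G.induce U).IsEdgeGraph ∨ (G.induce U).IsCycleGraph)

/-- A block elimination scheme: a sequence of contractions of free blocks,
starting from `G` and ending at a single vertex. -/
def HasBlockEliminationScheme (G : Multigraph V) : Prop :=
  ∃ (k : ℕ) (S : ℕ → Finset V), S 0 = Finset.univ ∧ (S k).card = 1 ∧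
    ∀ i < k, G.BlockStep (S i) (S (i + 1))

end Multigraph

/-!
By Riemann's inequality every divisor of degree at least `g` is L-effective. To see it, replace
the divisor by its `q`-reduced representative: reducedness lets one remove the vertices other
than `q` one at a time, each carrying fewer chips than edges it shares with vertices not yet
removed, so at most `g` chips lie away from `q`. Hence `f - λ` is L-effective whenever
`deg λ = deg f - g`, and `ρ(f) ≥ deg f - g`.

Conversely, rank the vertices in a graph search from `q` and let `ν(v)` be the number of edges
from `v` to earlier vertices, minus one. Then `deg ν = g - 1` and `ν` is not L-effective. As
`deg f ≥ 2g - 1`, Riemann's inequality gives an effective `E ∼ f - ν` of degree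
`deg f - g + 1`, and `f - E ∼ ν` is not L-effective, so `ρ(f) < deg f - g + 1`.
-/

theorem Pi.toLex_lt_of_le_of_lt {ι β : Type*} [LinearOrder ι] [WellFoundedLT ι]
    [PartialOrder β] {x y : ι → β} {i : ι} (hle : ∀ j ≤ i, x j ≤ y j) (hlt : x i < y i) :
    toLex x < toLex y := by
  obtain ⟨j, hj, hmin⟩ := wellFounded_lt.has_min {j | x j ≠ y j} ⟨i, hlt.ne⟩
  have hji : j ≤ i := not_lt.1 fun h => hmin i hlt.ne h
  exact ⟨j, fun k hk => by_contra fun h => hmin k h hk, lt_of_le_of_ne (hle j hji) hj⟩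

namespace Multigraph

open Finset

section Divisors

variable {V : Type*} [Fintype V]

lemma degree_add (f g : V → ℤ) : degree (f + g) = degree f + degree g := sum_add_distrib

lemma degree_sub (f g : V → ℤ) : degree (f - g) = degree f - degree g := sum_sub_distrib ..

end Divisors

variable {V : Type*} [Fintype V] [DecidableEq V] (G : Multigraph V)

section Laplacian

lemma lapApply_apply (x : V → ℤ) (v : V) :
    G.lapApply x v = ∑ u, (x v - x u) * G.e v u := by
  simp only [lapApply, vdeg, Nat.cast_sum, mul_sum, sub_mul, sum_sub_distrib, G.symm v]

lemma lapApply_add (x y : V → ℤ) : G.lapApply (x + y) = G.lapApply x + G.lapApply y := by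
  ext v
  simp only [lapApply_apply, Pi.add_apply, ← sum_add_distrib]
  exact sum_congr rfl fun _ _ => by ring

lemma lapApply_smul (c : ℤ) (x : V → ℤ) : G.lapApply (c • x) = c • G.lapApply x := by
  ext v
  simp only [lapApply_apply, Pi.smul_apply, smul_eq_mul, mul_sum]
  exact sum_congr rfl fun _ _ => by ring

lemma lapApply_neg (x : V → ℤ) : G.lapApply (-x) = -G.lapApply x := by
  simpa using G.lapApply_smul (-1) x

lemma sum_lapApply (x : V → ℤ) (T : Finset V) :
    ∑ w ∈ T, G.lapApply x w = ∑ w ∈ T, ∑ u ∈ Tᶜ, (x w - x u) * G.e w u := by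
  have inner : ∑ w ∈ T, ∑ u ∈ T, (x w - x u) * G.e w u = 0 := by
    have antisymm : ∑ w ∈ T, ∑ u ∈ T, (x w - x u) * G.e w u
        = -∑ w ∈ T, ∑ u ∈ T, (x w - x u) * G.e w u := by
      conv_lhs => rw [sum_comm]
      simp only [← sum_neg_distrib]
      exact sum_congr rfl fun _ _ => sum_congr rfl fun _ _ => by rw [G.symm]; ring
    linarith
  simp only [lapApply_apply, ← sum_add_sum_compl T, sum_add_distrib, inner, zero_add]

lemma degree_lapApply (x : V → ℤ) : degree (G.lapApply x) = 0 := by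
  simpa [degree] using G.sum_lapApply x univ

lemma lapApply_indicator_of_mem {S : Finset V} {v : V} (hv : v ∈ S) :
    G.lapApply ((S : Set V).indicator 1) v = ∑ u ∈ Sᶜ, (G.e v u : ℤ) := by
  rw [lapApply_apply, ← sum_add_sum_compl S, sum_eq_zero fun u hu => by simp [hv, hu], zero_add]
  exact sum_congr rfl fun u hu => by simp [hv, mem_compl.1 hu]

lemma lapApply_indicator_of_notMem {S : Finset V} {v : V} (hv : v ∉ S) :
    G.lapApply ((S : Set V).indicator 1) v = -∑ u ∈ S, (G.e v u : ℤ) := by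
  rw [lapApply_apply, ← sum_add_sum_compl S, ← sum_neg_distrib,
    sum_eq_zero (s := Sᶜ) fun u hu => by simp [hv, mem_compl.1 hu], add_zero]
  exact sum_congr rfl fun u hu => by simp [hv, hu]

lemma sum_lapApply_indicator_of_subset {S T : Finset V} (hST : S ⊆ T) :
    ∑ w ∈ T, G.lapApply ((S : Set V).indicator 1) w
      = ∑ w ∈ S, ∑ u ∈ Tᶜ, (G.e w u : ℤ) := by
  have outside : ∀ u ∈ Tᶜ, (S : Set V).indicator (1 : V → ℤ) u = 0 := fun u hu =>
    Set.indicator_of_notMem (fun h => mem_compl.1 hu (hST h)) _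
  rw [sum_lapApply, ← sum_subset hST fun w _ hw => sum_eq_zero fun u hu => by
    simp [Set.indicator_of_notMem (show w ∉ (S : Set V) from hw), outside u hu]]
  exact sum_congr rfl fun w hw => sum_congr rfl fun u hu => by
    simp [Set.indicator_of_mem (show w ∈ (S : Set V) from hw), outside u hu]

lemma one_le_sum_e_of_ne_zero {s : Finset V} {v u : V} (hu : u ∈ s) (h : G.e v u ≠ 0) :
    1 ≤ ∑ w ∈ s, (G.e v w : ℤ) :=
  (show (1 : ℤ) ≤ G.e v u by exact_mod_cast Nat.one_le_iff_ne_zero.2 h).trans <|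
    single_le_sum (f := fun w => (G.e v w : ℤ)) (fun _ _ => by positivity) hu

end Laplacian

section LinearEquivalence

lemma linEquiv_equivalence : Equivalence G.LinEquiv where
  refl f := ⟨0, by simpa using (G.lapApply_smul 0 0).trans (zero_smul ℤ _)⟩
  symm := by
    rintro f g ⟨x, rfl⟩
    exact ⟨-x, by rw [lapApply_neg]; abel⟩
  trans := by
    rintro f g h ⟨x, rfl⟩ ⟨y, rfl⟩
    exact ⟨x + y, by rw [lapApply_add]; abel⟩

variable {G}

lemma LinEquiv.degree_eq {f g : V → ℤ} (h : G.LinEquiv f g) : degree g = degree f := by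
  obtain ⟨x, rfl⟩ := h
  rw [degree_add, degree_lapApply, add_zero]

lemma LEffective.of_linEquiv {f g : V → ℤ} (hfg : G.LinEquiv f g) (hg : G.LEffective g) :
    G.LEffective f := by
  obtain ⟨k, hgk, hk⟩ := hg
  exact ⟨k, G.linEquiv_equivalence.trans hfg hgk, hk⟩

lemma LEffective.of_sub {f l : V → ℤ} (h : G.LEffective (f - l)) (hl : Effective l) :
    G.LEffective f := by
  obtain ⟨g, ⟨x, hx⟩, hg⟩ := h
  exact ⟨g + l, ⟨x, by rw [hx]; abel⟩, fun v => add_nonneg (hg v) (hl v)⟩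

lemma rank_eq_of_forall_of_exists [Nonempty V] {f : V → ℤ} {r : ℤ} (hr : -1 ≤ r)
    (hall : ∀ l, Effective l → degree l = r → G.LEffective (f - l))
    {E : V → ℤ} (hE : Effective E) (hEdeg : degree E = r + 1)
    (hfE : ¬ G.LEffective (f - E)) :
    G.rank f = r := by
  refine IsGreatest.csSup_eq ⟨?_, ?_⟩
  · rcases hr.eq_or_lt with rfl | hr
    · exact Or.inl rfl
    · exact Or.inr ⟨by omega, hall⟩
  · rintro s (rfl | ⟨hs, hsall⟩)
    · exact hr
    by_contra! hrs
    set q := Classical.arbitrary V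
    have hεq : Effective ((s - (r + 1)) • epsDiv q) := fun v => by
      simp only [Pi.smul_apply, epsDiv, smul_eq_mul]; split_ifs <;> omega
    have hdeg : degree (E + (s - (r + 1)) • epsDiv q) = s := by
      rw [degree_add, hEdeg]
      simp [degree, epsDiv]
    refine hfE (LEffective.of_sub ?_ hεq)
    rw [sub_sub]
    exact hsall _ (fun v => add_nonneg (hE v) (hεq v)) hdeg

end LinearEquivalence

section SearchOrder

def IsSearchOrder (q : V) (ρ : V → ℕ) : Prop :=
  Function.Injective ρ ∧ ∀ v, v ≠ q → ∃ u, G.e v u ≠ 0 ∧ ρ u < ρ v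

def inDegree (ρ : V → ℕ) (v : V) : ℕ := ∑ u ∈ univ.filter (fun u => ρ u < ρ v), G.e v u

/-- Baker–Norine's divisor `ν_O(v) = indeg_O(v) - 1` for the acyclic orientation `O` of the
edges from earlier to later vertices. -/
def acyclicDiv (ρ : V → ℕ) (v : V) : ℤ := G.inDegree ρ v - 1

def genus : ℤ := G.edgeCount - Fintype.card V + 1

variable {G}

protected lemma Connected.nonempty (hG : G.Connected) : Nonempty V :=
  SimpleGraph.Connected.nonempty hG

lemma Connected.exists_adj_dist_lt (hG : G.Connected) {q v : V} (hv : v ≠ q) :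
    ∃ u, G.e v u ≠ 0 ∧ G.toSimple.dist q u < G.toSimple.dist q v := by
  obtain ⟨p, hp⟩ := SimpleGraph.Connected.exists_walk_length_eq_dist hG v q
  cases p with
  | nil => exact absurd rfl hv
  | @cons _ u _ hadj p' =>
    refine ⟨u, hadj, ?_⟩
    rw [SimpleGraph.dist_comm, SimpleGraph.dist_comm (u := q), ← hp]
    exact (SimpleGraph.dist_le p').trans_lt (by simp)

/-- Vertices ranked by their distance from `q`, ties broken by an enumeration of `V`. -/
lemma Connected.exists_isSearchOrder (hG : G.Connected) (q : V) :
    ∃ ρ, G.IsSearchOrder q ρ := by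
  set n := Fintype.card V
  set σ := Fintype.equivFin V
  have key : ∀ a b : ℕ, ∀ v w : V, a < b → a * n + σ v < b * n + σ w := fun a b v w hab =>
    calc a * n + σ v < (a + 1) * n := by
          rw [add_mul, one_mul]; exact Nat.add_lt_add_left (σ v).2 _
      _ ≤ b * n := Nat.mul_le_mul_right n hab
      _ ≤ b * n + σ w := Nat.le_add_right _ _
  refine ⟨fun v => G.toSimple.dist q v * n + σ v, fun v w h => ?_, fun v hv => ?_⟩
  · rcases lt_trichotomy (G.toSimple.dist q v) (G.toSimple.dist q w) with hlt | heq | hgt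
    · exact absurd h (key _ _ v w hlt).ne
    · simp only [heq, add_right_inj] at h
      exact σ.injective (Fin.ext h)
    · exact absurd h (key _ _ w v hgt).ne'
  · obtain ⟨u, hu, hlt⟩ := hG.exists_adj_dist_lt hv
    exact ⟨u, hu, key _ _ u v hlt⟩

lemma IsSearchOrder.lt_of_ne {q : V} {ρ : V → ℕ} (hρ : G.IsSearchOrder q ρ) :
    ∀ {v}, v ≠ q → ρ q < ρ v := by
  intro v
  induction h : ρ v using Nat.strong_induction_on generalizing v with
  | _ k ih =>
    intro hv
    obtain ⟨u, -, hu⟩ := hρ.2 v hv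
    subst h
    rcases eq_or_ne u q with rfl | huq
    · exact hu
    · exact (ih _ hu rfl huq).trans hu

lemma sum_vdeg_eq_two_mul_sum_inDegree {ρ : V → ℕ} (hρ : Function.Injective ρ) :
    ∑ v, G.vdeg v = 2 * ∑ v, G.inDegree ρ v := by
  have split : ∀ v u, G.e v u
      = (if ρ u < ρ v then G.e v u else 0) + (if ρ v < ρ u then G.e u v else 0) := by
    intro v u
    rcases lt_trichotomy (ρ v) (ρ u) with h | h | h
    · simp [h, h.not_gt, G.symm v u]
    · simp [hρ h, G.loopless]
    · simp [h, h.not_gt]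
  simp only [vdeg, sum_congr rfl fun v _ => sum_congr rfl fun u _ => split v u, sum_add_distrib,
    inDegree, sum_filter]
  rw [sum_comm (f := fun v u => if ρ v < ρ u then G.e u v else 0)]
  ring

lemma edgeCount_eq_sum_inDegree {ρ : V → ℕ} (hρ : Function.Injective ρ) :
    G.edgeCount = ∑ v, G.inDegree ρ v := by
  rw [edgeCount, ← Nat.mul_div_cancel_left (∑ v, G.inDegree ρ v) two_pos,
    ← G.sum_vdeg_eq_two_mul_sum_inDegree hρ]
  rfl

lemma sum_vdeg_eq_two_mul_edgeCount : ∑ v, G.vdeg v = 2 * G.edgeCount := by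
  have hσ : Function.Injective fun v => (Fintype.equivFin V v : ℕ) :=
    Fin.val_injective.comp (Fintype.equivFin V).injective
  rw [G.sum_vdeg_eq_two_mul_sum_inDegree hσ, G.edgeCount_eq_sum_inDegree hσ]

lemma IsSearchOrder.card_le_edgeCount_add_one {q : V} {ρ : V → ℕ}
    (hρ : G.IsSearchOrder q ρ) : Fintype.card V ≤ G.edgeCount + 1 := by
  have one_le : ∀ v ∈ univ.erase q, 1 ≤ G.inDegree ρ v := by
    intro v hv
    obtain ⟨u, hu, hlt⟩ := hρ.2 v (ne_of_mem_erase hv)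
    exact (Nat.one_le_iff_ne_zero.2 hu).trans
      (single_le_sum (f := fun u => G.e v u) (fun _ _ => Nat.zero_le _) (by simpa using hlt))
  calc Fintype.card V = (univ.erase q).card + 1 := by
        rw [card_erase_of_mem (mem_univ q), card_univ,
          Nat.sub_add_cancel (Fintype.card_pos_iff.2 ⟨q⟩)]
    _ ≤ ∑ v ∈ univ.erase q, G.inDegree ρ v + 1 := by
        simpa using sum_le_sum one_le
    _ ≤ G.edgeCount + 1 := by
        rw [G.edgeCount_eq_sum_inDegree hρ.1]
        exact Nat.add_le_add_right (sum_le_sum_of_subset (subset_univ _)) 1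

lemma degree_acyclicDiv {ρ : V → ℕ} (hρ : Function.Injective ρ) :
    degree (G.acyclicDiv ρ) = G.edgeCount - Fintype.card V := by
  simp [degree, acyclicDiv, sum_sub_distrib, G.edgeCount_eq_sum_inDegree hρ]

/-- Consider the vertex of least rank among those where a firing script `x` is minimal: it
receives nothing from its later neighbours and loses a chip along each edge to an earlier one. -/
lemma not_lEffective_acyclicDiv [Nonempty V] (ρ : V → ℕ) :
    ¬ G.LEffective (G.acyclicDiv ρ) := by
  rintro ⟨h, ⟨x, rfl⟩, hh⟩
  obtain ⟨w, -, hw⟩ := exists_min_image univ x univ_nonempty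
  obtain ⟨v, hv, hvmin⟩ :=
    exists_min_image (univ.filter (fun u => x u = x w)) ρ ⟨w, by simp⟩
  have hxv : x v = x w := (mem_filter.1 hv).2
  have earlier_higher : ∀ u, ρ u < ρ v → x v + 1 ≤ x u := by
    intro u hu
    have : x u ≠ x w := fun he => (hvmin u (by simp [he])).not_gt hu
    have := hw u (mem_univ u)
    omega
  have hlap : G.lapApply x v ≤ -G.inDegree ρ v := by
    rw [lapApply_apply, inDegree, Nat.cast_sum, ← sum_neg_distrib, sum_filter]
    refine sum_le_sum fun u _ => ?_
    split_ifs with hu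
    · nlinarith [earlier_higher u hu, (G.e v u).cast_nonneg (α := ℤ)]
    · nlinarith [hw u (mem_univ u), (G.e v u).cast_nonneg (α := ℤ)]
  have := hh v
  simp only [Pi.add_apply, acyclicDiv] at this
  omega

end SearchOrder

section Reduced

def tail (ρ : V → ℕ) (v : V) : Finset V := univ.filter fun w => ρ v ≤ ρ w

/-- `q`-reduced: nonnegative away from `q`, and no nonempty set of vertices avoiding `q` can
fire (send a chip along every edge leaving it) without one of its vertices going into debt. -/
def IsReduced (q : V) (f : V → ℤ) : Prop :=
  (∀ v, v ≠ q → 0 ≤ f v) ∧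
    ∀ S : Finset V, q ∉ S → S.Nonempty → ∃ v ∈ S, f v < ∑ u ∈ Sᶜ, (G.e v u : ℤ)

/-- Peel off, one at a time, vertices that cannot fire; each keeps fewer chips than it has edges
leaving the remaining set, and these edge sets are disjoint. -/
lemma two_mul_sum_add_one_le {f : V → ℤ} {S : Finset V}
    (hS : ∀ T ⊆ S, T.Nonempty → ∃ v ∈ T, f v < ∑ u ∈ Tᶜ, (G.e v u : ℤ)) :
    2 * ∑ v ∈ S, (f v + 1)
      ≤ ∑ v ∈ S, ((G.vdeg v : ℤ) + ∑ u ∈ Sᶜ, (G.e v u : ℤ)) := by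
  induction S using Finset.strongInduction with
  | _ S ih =>
    rcases S.eq_empty_or_nonempty with rfl | hne
    · simp
    obtain ⟨v, hvS, hv⟩ := hS S subset_rfl hne
    have ih' := ih (S.erase v) (erase_ssubset hvS)
      fun T hT => hS T (hT.trans (erase_subset v S))
    have vdeg_split : (G.vdeg v : ℤ)
        = ∑ w ∈ S.erase v, (G.e v w : ℤ) + ∑ u ∈ Sᶜ, (G.e v u : ℤ) := by
      rw [vdeg, Nat.cast_sum, ← sum_add_sum_compl S, ← add_sum_erase S _ hvS, G.loopless]
      simp
    have out_erase : ∀ w, ∑ u ∈ (S.erase v)ᶜ, (G.e w u : ℤ)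
        = G.e w v + ∑ u ∈ Sᶜ, (G.e w u : ℤ) := fun w => by
      rw [compl_erase, sum_insert (by simpa using hvS)]
    rw [← add_sum_erase S _ hvS, ← add_sum_erase S _ hvS]
    simp only [out_erase, sum_add_distrib] at ih' ⊢
    simp only [G.symm _ v] at ih'
    linarith

variable {G}

/-- Treat the vertices in order of decreasing rank: lending chips to the tail of `a` (firing its
complement) feeds `a` through the edge to an earlier neighbour and takes from no tail vertex. -/
lemma IsSearchOrder.exists_linEquiv_nonneg {q : V} {ρ : V → ℕ} (hρ : G.IsSearchOrder q ρ)
    (f : V → ℤ) : ∃ f', G.LinEquiv f f' ∧ ∀ v, v ≠ q → 0 ≤ f' v := by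
  suffices ∀ s : Finset V, ∃ f', G.LinEquiv f f' ∧ ∀ v ∈ s, v ≠ q → 0 ≤ f' v by
    simpa using this univ
  intro s
  induction s using Finset.induction_on_min_value ρ with
  | empty => exact ⟨f, G.linEquiv_equivalence.refl f, by simp⟩
  | insert a s _ ha ih =>
    obtain ⟨f', hff', hf'⟩ := ih
    set x : V → ℤ := ((tail ρ a : Finset V) : Set V).indicator 1
    have gain : ∀ w ∈ tail ρ a, 0 ≤ G.lapApply x w := fun w hw => by
      rw [lapApply_indicator_of_mem _ hw]; positivity
    set c : ℤ := max 0 (-f' a)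
    refine ⟨f' + G.lapApply (c • x),
      G.linEquiv_equivalence.trans hff' ⟨c • x, rfl⟩, fun w hw hwq => ?_⟩
    rw [lapApply_smul, Pi.add_apply, Pi.smul_apply, smul_eq_mul]
    rcases mem_insert.1 hw with rfl | hw
    · obtain ⟨u, hu, hlt⟩ := hρ.2 w hwq
      have : 1 ≤ G.lapApply x w := by
        rw [lapApply_indicator_of_mem _ (by simp [tail])]
        exact G.one_le_sum_e_of_ne_zero (by simpa [tail] using hlt) hu
      nlinarith [le_max_left 0 (-f' w), le_max_right 0 (-f' w)]
    · have := gain w (by simpa [tail] using ha w hw)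
      nlinarith [hf' w hw hwq, le_max_left 0 (-f' a)]

/-- Minimise the chip counts on the tails, lexicographically along `ρ`. Firing a set `S` that
avoids `q` takes from each tail starting at or before the first vertex `v₀` of `S` the chips sent
out of it, among them one along the edge from `v₀` to an earlier neighbour. -/
lemma IsSearchOrder.exists_linEquiv_isReduced {q : V} {ρ : V → ℕ} (hρ : G.IsSearchOrder q ρ)
    (f : V → ℤ) : ∃ f', G.LinEquiv f f' ∧ G.IsReduced q f' := by
  let : LinearOrder V := LinearOrder.lift' ρ hρ.1
  let μ : (V → ℤ) → Lex (V → ℕ) := fun g => toLex fun v => (∑ w ∈ tail ρ v, g w).toNat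
  obtain ⟨g, ⟨hfg, hg⟩, hmin⟩ := (InvImage.wf μ wellFounded_lt).has_min
    {g | G.LinEquiv f g ∧ ∀ v, v ≠ q → 0 ≤ g v} (hρ.exists_linEquiv_nonneg f)
  refine ⟨g, hfg, hg, ?_⟩
  by_contra! hfire
  obtain ⟨S, hqS, hS, hSfire⟩ := hfire
  obtain ⟨v₀, hv₀S, hv₀min⟩ := S.exists_min_image ρ hS
  set g' := g - G.lapApply ((S : Set V).indicator 1) with hg'_def
  have hgg' : G.LinEquiv g g' :=
    ⟨-(S : Set V).indicator 1, by rw [lapApply_neg, ← sub_eq_add_neg]⟩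
  have hg' : ∀ v, v ≠ q → 0 ≤ g' v := by
    intro v hv
    rw [hg'_def, Pi.sub_apply]
    by_cases hvS : v ∈ S
    · linarith [hSfire v hvS, G.lapApply_indicator_of_mem hvS]
    · rw [G.lapApply_indicator_of_notMem hvS]
      linarith [hg v hv, sum_nonneg fun u (_ : u ∈ S) => (G.e v u).cast_nonneg (α := ℤ)]
  have tail_sum : ∀ v, ρ v ≤ ρ v₀ → ∑ w ∈ tail ρ v, g' w
      = ∑ w ∈ tail ρ v, g w - ∑ w ∈ S, ∑ u ∈ (tail ρ v)ᶜ, (G.e w u : ℤ) := fun v hv => by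
    have hST : S ⊆ tail ρ v := fun w hw => by simpa [tail] using hv.trans (hv₀min w hw)
    rw [← G.sum_lapApply_indicator_of_subset hST, ← sum_sub_distrib]
    rfl
  refine hmin g' ⟨G.linEquiv_equivalence.trans hfg hgg', hg'⟩
    (Pi.toLex_lt_of_le_of_lt (i := v₀) (fun v hv => Int.toNat_le_toNat ?_) ?_)
  · rw [tail_sum v hv]
    linarith [sum_nonneg fun w (_ : w ∈ S) => sum_nonneg fun u (_ : u ∈ (tail ρ v)ᶜ) =>
      (G.e w u).cast_nonneg (α := ℤ)]
  · have hv₀q : v₀ ≠ q := fun h => hqS (h ▸ hv₀S)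
    obtain ⟨u, hu, hlt⟩ := hρ.2 v₀ hv₀q
    have lost : 1 ≤ ∑ w ∈ S, ∑ u ∈ (tail ρ v₀)ᶜ, (G.e w u : ℤ) :=
      (G.one_le_sum_e_of_ne_zero (by simpa [tail] using hlt) hu).trans <|
        single_le_sum (f := fun w => ∑ u ∈ (tail ρ v₀)ᶜ, (G.e w u : ℤ))
          (fun _ _ => sum_nonneg fun _ _ => by positivity) hv₀S
    have nonneg : 0 ≤ ∑ w ∈ tail ρ v₀, g' w := sum_nonneg fun w hw =>
      hg' w fun h => by simp [tail, h] at hw; exact (hρ.lt_of_ne hv₀q).not_ge hw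
    refine Int.toNat_lt_toNat ?_ |>.2 ?_ <;> linarith [tail_sum v₀ le_rfl]

lemma IsReduced.sum_erase_le_genus {q : V} {f : V → ℤ} (hf : G.IsReduced q f) :
    ∑ v ∈ univ.erase q, f v ≤ G.genus := by
  have key := G.two_mul_sum_add_one_le (S := univ.erase q) fun T hT hTne =>
    hf.2 T (fun hq => by simpa using hT hq) hTne
  have rhs : ∑ v ∈ univ.erase q, ((G.vdeg v : ℤ) + ∑ u ∈ (univ.erase q)ᶜ, (G.e v u : ℤ))
      = 2 * G.edgeCount := by
    have hcompl : (univ.erase q)ᶜ = {q} := by ext; simp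
    have vdeg_q : (G.vdeg q : ℤ) = ∑ v ∈ univ.erase q, (G.e q v : ℤ) := by
      rw [vdeg, Nat.cast_sum, ← add_sum_erase _ _ (mem_univ q), G.loopless]
      simp
    simp only [hcompl, sum_add_distrib, sum_singleton, G.symm _ q]
    rw [← vdeg_q, sum_erase_add _ _ (mem_univ q)]
    exact_mod_cast G.sum_vdeg_eq_two_mul_edgeCount
  rw [rhs, sum_add_distrib, sum_const, card_erase_of_mem (mem_univ q), card_univ, nsmul_one,
    Nat.cast_sub (Fintype.card_pos_iff.2 ⟨q⟩), Nat.cast_one] at key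
  simp only [genus]
  linarith

theorem lEffective_of_genus_le_degree (hG : G.Connected) {f : V → ℤ}
    (hf : G.genus ≤ degree f) : G.LEffective f := by
  obtain ⟨q⟩ := hG.nonempty
  obtain ⟨ρ, hρ⟩ := hG.exists_isSearchOrder q
  obtain ⟨f', hff', hred⟩ := hρ.exists_linEquiv_isReduced f
  refine ⟨f', hff', fun v => ?_⟩
  rcases eq_or_ne v q with rfl | hv
  · have := hred.sum_erase_le_genus
    rw [← hff'.degree_eq, degree, ← add_sum_erase _ _ (mem_univ v)] at hf
    linarith
  · exact hred.1 v hv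

end Reduced

end Multigraph

open Multigraph

variable {V : Type*} [Fintype V] [DecidableEq V]

/-- if `deg(f) > 2(m − n)` then `ρ(f) = deg(f) − g`, where
`g = m − n + 1`. -/
theorem rank_of_large_degree (G : Multigraph V) (hG : G.Connected)
    (f : V → ℤ)
    (hdeg : degree f > 2 * ((G.edgeCount : ℤ) - (Fintype.card V : ℤ))) :
    G.rank f = degree f - ((G.edgeCount : ℤ) - (Fintype.card V : ℤ) + 1) := by
  have := hG.nonempty
  obtain ⟨ρ, hρ⟩ := hG.exists_isSearchOrder (Classical.arbitrary V)
  have hg : 0 ≤ G.genus := by have := hρ.card_le_edgeCount_add_one; unfold genus; omega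
  have hdeg' : 2 * G.genus - 1 ≤ degree f := by unfold genus; omega
  obtain ⟨E, hE, hEeff⟩ := lEffective_of_genus_le_degree hG (f := f - G.acyclicDiv ρ)
    (by rw [degree_sub, degree_acyclicDiv hρ.1]; unfold genus at *; omega)
  have hνE : G.LinEquiv (G.acyclicDiv ρ) (f - E) := by
    obtain ⟨x, rfl⟩ := hE
    exact ⟨-x, by rw [lapApply_neg]; abel⟩
  change G.rank f = degree f - G.genus
  refine rank_eq_of_forall_of_exists (E := E) (by omega)
    (fun l _ hl => lEffective_of_genus_le_degree hG (by rw [degree_sub, hl]; omega)) hEeff ?_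
    fun h => not_lEffective_acyclicDiv ρ (h.of_linEquiv hνE)
  rw [hE.degree_eq, degree_sub, degree_acyclicDiv hρ.1]
  unfold genus; ring
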